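/- arXiv:1508.04548 — 5 statements merged into one kernel-verified Lean document; each statement's English description precedes it below -/
import Mathlib

section
/- If G is a finite group and u is a normalized unit (augmentation one unit) of finite order n in the integral group ring ZG with u ≠ 1, then the coefficient of the identity element in u is zero (Berman–Higman theorem). -/
/-! The left regular representation `ρ` of `ℂ[G]` on itself sends a unit `u` of finite order to
an endomorphism of finite order with trace `|G| · u(1)`. Its eigenvalues are `|G|` roots of unity,
so `|u(1)| ≤ 1`, and a nonzero `u(1)` is `±1`. Then `ρ (u(1) • u)` has finite order and trace `|G|`,
which forces all its eigenvalues to be `1`; being also semisimple (finite order in characteristic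
zero) it is the identity. Hence `u(1) • u = 1`, and taking augmentations gives `u(1) = 1`, so
`u = 1`. -/

open Module

theorem Complex.eq_one_of_norm_eq_one_of_re_eq_one {z : ℂ} (hnorm : ‖z‖ = 1) (hre : z.re = 1) :
    z = 1 :=
  Complex.ext hre (Complex.abs_re_eq_norm.1 (by rw [hre, hnorm, abs_one]))

theorem Multiset.eq_one_of_norm_eq_one_of_sum_eq_card {s : Multiset ℂ} (hs : ∀ z ∈ s, ‖z‖ = 1)
    (hsum : s.sum = Multiset.card s) : ∀ z ∈ s, z = 1 := by
  by_contra! ⟨z, hz, hz1⟩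
  have hre_le : ∀ w ∈ s, w.re ≤ 1 := fun w hw => (Complex.re_le_norm w).trans (hs w hw).le
  have hlt : (s.map Complex.re).sum < (s.map fun _ => (1 : ℝ)).sum :=
    Multiset.sum_lt_sum hre_le ⟨z, hz, (hre_le z hz).lt_of_ne
      fun h => hz1 (Complex.eq_one_of_norm_eq_one_of_re_eq_one (hs z hz) h)⟩
  have hre_sum : (s.map Complex.re).sum = Multiset.card s := by
    rw [← Complex.coe_reAddGroupHom, ← map_multiset_sum, Complex.coe_reAddGroupHom, hsum,
      Complex.natCast_re]
  simp [hre_sum] at hlt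

namespace Module.End

open Polynomial

section Field

variable {K V : Type*} [Field K] [AddCommGroup V] [Module K V] {f : End K V} {m : ℕ}

theorem isSemisimple_of_pow_eq_one (hf : f ^ m = 1) (hm : (m : K) ≠ 0) : f.IsSemisimple :=
  isSemisimple_of_squarefree_aeval_eq_zero ((separable_X_pow_sub_C 1 hm one_ne_zero).squarefree)
    (by simp [hf])

theorem pow_eq_one_of_hasEigenvalue (hf : f ^ m = 1) {z : K} (hz : f.HasEigenvalue z) :
    z ^ m = 1 := by
  obtain ⟨v, hv⟩ := hz.exists_hasEigenvector
  have h := hv.pow_apply m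
  rw [hf, one_apply, ← one_smul K v, smul_smul, mul_one] at h
  exact smul_left_injective K hv.2 h.symm

variable [FiniteDimensional K V]

theorem pow_eq_one_of_mem_roots_charpoly (hf : f ^ m = 1) {z : K} (hz : z ∈ f.charpoly.roots) :
    z ^ m = 1 :=
  pow_eq_one_of_hasEigenvalue hf
    ((hasEigenvalue_iff_isRoot_charpoly f z).2 (isRoot_of_mem_roots hz))

variable [IsAlgClosed K]

theorem card_roots_charpoly (f : End K V) :
    Multiset.card f.charpoly.roots = finrank K V := by
  rw [← LinearMap.charpoly_natDegree f, ← splits_iff_card_roots]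
  exact IsAlgClosed.splits _

theorem charpoly_eq_X_sub_one_pow (h : ∀ z ∈ f.charpoly.roots, z = 1) :
    f.charpoly = (X - 1) ^ finrank K V := by
  rw [(IsAlgClosed.splits f.charpoly).eq_prod_roots_of_monic (LinearMap.charpoly_monic f),
    Multiset.eq_replicate_card.2 h]
  simp [card_roots_charpoly]

theorem eq_one_of_pow_eq_one_of_roots_charpoly (hf : f ^ m = 1) (hm : (m : K) ≠ 0)
    (h : ∀ z ∈ f.charpoly.roots, z = 1) : f = 1 := by
  have hnil : IsNilpotent (f - 1) := ⟨finrank K V, by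
    simpa [charpoly_eq_X_sub_one_pow h] using LinearMap.aeval_self_charpoly f⟩
  have hss : (f - 1).IsSemisimple := by
    simpa using isSemisimple_sub_algebraMap_iff (μ := (1 : K)) |>.2
      (isSemisimple_of_pow_eq_one hf hm)
  exact sub_eq_zero.1 (eq_zero_of_isNilpotent_isSemisimple hnil hss)

end Field

variable {V : Type*} [AddCommGroup V] [Module ℂ V] [FiniteDimensional ℂ V] {f : End ℂ V} {m : ℕ}

theorem norm_eq_one_of_mem_roots_charpoly (hf : f ^ m = 1) (hm : m ≠ 0) {z : ℂ}
    (hz : z ∈ f.charpoly.roots) : ‖z‖ = 1 :=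
  Complex.norm_eq_one_of_pow_eq_one (pow_eq_one_of_mem_roots_charpoly hf hz) hm

theorem norm_trace_le_finrank (hf : f ^ m = 1) (hm : m ≠ 0) :
    ‖LinearMap.trace ℂ V f‖ ≤ finrank ℂ V := by
  rw [trace_eq_sum_roots_charpoly_of_splits (IsAlgClosed.splits _), ← card_roots_charpoly f]
  refine (norm_multiset_sum_le _).trans ?_
  rw [Multiset.map_congr rfl fun z hz => norm_eq_one_of_mem_roots_charpoly hf hm hz]
  simp

theorem eq_one_of_pow_eq_one_of_trace_eq_finrank (hf : f ^ m = 1) (hm : m ≠ 0)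
    (htr : LinearMap.trace ℂ V f = finrank ℂ V) : f = 1 := by
  refine eq_one_of_pow_eq_one_of_roots_charpoly hf (Nat.cast_ne_zero.2 hm) ?_
  rw [trace_eq_sum_roots_charpoly_of_splits (IsAlgClosed.splits _), ← card_roots_charpoly f] at htr
  exact Multiset.eq_one_of_norm_eq_one_of_sum_eq_card
    (fun z hz => norm_eq_one_of_mem_roots_charpoly hf hm hz) htr

end Module.End

namespace MonoidAlgebra

variable {G : Type*} [Fintype G]

theorem finrank_eq_card (k : Type*) [Field k] :
    finrank k (MonoidAlgebra k G) = Fintype.card G := by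
  simp [finrank_eq_card_basis (MonoidAlgebra.basis G k)]

variable [Group G]

theorem trace_lmul {k : Type*} [CommRing k] (x : MonoidAlgebra k G) :
    LinearMap.trace k _ (Algebra.lmul k (MonoidAlgebra k G) x) = Fintype.card G * x.coeff 1 := by
  classical
  rw [LinearMap.trace_eq_matrix_trace k (MonoidAlgebra.basis G k), Matrix.trace]
  simp [LinearMap.toMatrix_apply, MonoidAlgebra.basis]

variable {x : MonoidAlgebra ℂ G} {m : ℕ}

theorem norm_coeff_one_le_one (hx : x ^ m = 1) (hm : m ≠ 0) : ‖x.coeff 1‖ ≤ 1 := by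
  have h := End.norm_trace_le_finrank (f := Algebra.lmul ℂ _ x)
    (by rw [← map_pow, hx, map_one]) hm
  rw [trace_lmul, finrank_eq_card, norm_mul, Complex.norm_natCast] at h
  have hG : (0 : ℝ) < Fintype.card G := by exact_mod_cast Fintype.card_pos
  nlinarith

theorem eq_one_of_pow_eq_one_of_coeff_one_eq_one (hx : x ^ m = 1) (hm : m ≠ 0)
    (h1 : x.coeff 1 = 1) : x = 1 := by
  refine Algebra.lmul_injective (R := ℂ) ?_
  rw [map_one]
  refine End.eq_one_of_pow_eq_one_of_trace_eq_finrank (by rw [← map_pow, hx, map_one]) hm ?_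
  rw [trace_lmul, finrank_eq_card, h1, mul_one]

end MonoidAlgebra

/-- **Berman–Higman theorem.** If `u ≠ 1` is a normalized (augmentation-one) unit of
finite order `n` in the integral group ring of a finite group `G`, then the
coefficient of the identity element in `u` is zero. -/
theorem berman_higman (G : Type) [Group G] [Fintype G]
    (u : (MonoidAlgebra ℤ G)ˣ) (n : ℕ) (hn : 0 < n) (hord : orderOf u = n)
    (haug : ∑ g : G, (u : MonoidAlgebra ℤ G).coeff g = 1)
    (hne : u ≠ 1) :
    (u : MonoidAlgebra ℤ G).coeff (1 : G) = 0 := by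
  set c := (u : MonoidAlgebra ℤ G).coeff 1
  by_contra hc0
  let φ := MonoidAlgebra.mapRingHom G (Int.castRingHom ℂ)
  have hφ : Function.Injective φ :=
    MonoidAlgebra.map_injective (Int.castRingHom ℂ : ℤ →+ ℂ) Int.cast_injective
  have hx : φ u ^ n = 1 := by
    rw [← map_pow, ← Units.val_pow_eq_pow_val, ← hord, pow_orderOf_eq_one, Units.val_one, map_one]
  have hxc : (φ u).coeff 1 = c := by simp [φ, MonoidAlgebra.coe_mapRingHom, c]
  have hc_sq : c ^ 2 = 1 := by
    have h := MonoidAlgebra.norm_coeff_one_le_one hx hn.ne'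
    rw [hxc, Complex.norm_intCast] at h
    have hc_abs : |c| = 1 := le_antisymm (by exact_mod_cast h) (Int.one_le_abs hc0)
    rw [← sq_abs, hc_abs, one_pow]
  have hcu : c • (u : MonoidAlgebra ℤ G) = 1 := by
    apply hφ
    rw [map_one, map_zsmul]
    refine MonoidAlgebra.eq_one_of_pow_eq_one_of_coeff_one_eq_one (m := 2 * n) ?_ (by omega) ?_
    · rw [smul_pow, pow_mul c, hc_sq, pow_mul' (φ u), hx, one_pow, one_pow, one_smul]
    · rw [MonoidAlgebra.coeff_smul, Finsupp.smul_apply, hxc, zsmul_eq_mul, ← Int.cast_mul, ← sq,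
        hc_sq, Int.cast_one]
  have hc1 : c = 1 := by
    classical
    have h := congrArg (fun x : MonoidAlgebra ℤ G => ∑ g, x.coeff g) hcu
    simpa only [MonoidAlgebra.coeff_smul, Finsupp.smul_apply, smul_eq_mul, ← Finset.mul_sum,
      haug, mul_one, MonoidAlgebra.one_def, MonoidAlgebra.coeff_single, Finsupp.single_apply,
      Finset.sum_ite_eq, Finset.mem_univ, if_true] using h
  exact hne (Units.ext (by simpa [hc1] using hcu))
end

section
/- Let G be a finite group, n a positive integer, and let pa = (pa_d)_{d|n} be a distribution of virtual partial augmentations of order n for G (satisfying conditions (V1)–(V4)). For a divisor m of n, define pa^{n/m} by (pa^{n/m})_d = pa_{d·n/m} for d | m. Then for every ordinary character χ of G (or Brauer character modulo a prime not dividing n) and every integer l: μ(ζ_m^l, pa^{n/m}, χ) = Σ_{ξ : ξ^{n/m} = ζ_m^l} μ(ξ, pa, χ). -/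
open scoped Classical
noncomputable section

/-- A fixed primitive `n`-th root of unity in `ℂ`. -/
def zetaC (n : ℕ) : ℂ := Complex.exp (2 * Real.pi * Complex.I / n)

/-- The cyclotomic field `ℚ(ζ_m)` as a subfield of `ℂ`. -/
def cycF (m : ℕ) : IntermediateField ℚ ℂ := IntermediateField.adjoin ℚ {zetaC m}

/-- Trace from `ℚ(ζ_m)` down to `ℚ` of a complex number lying in `ℚ(ζ_m)`
(junk value `0` otherwise). -/
def trQ (m : ℕ) (z : ℂ) : ℚ :=
  if h : z ∈ cycF m then Algebra.trace ℚ (cycF m) ⟨z, h⟩ else 0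

variable {G : Type} [Group G] [Fintype G]

/-- The sum of the values of `f` over a set of representatives of the conjugacy
classes of `G`. -/
def classSum {R : Type} [AddCommMonoid R] (f : G → R) : R :=
  ∑ c : ConjClasses G, f c.out

/-- The Luthar–Passi "multiplicity" of `ξ` attached to a list `pa` of class functions
(indexed by naturals; only indices dividing `n` matter) and a character `χ`. -/
def muLP (n : ℕ) (pa : ℕ → G → ℤ) (χ : G → ℂ) (ξ : ℂ) : ℂ :=
  (n : ℂ)⁻¹ * ∑ c : ConjClasses G, ∑ d ∈ n.divisors,
    (pa d c.out : ℂ) * (trQ (n / d) (χ c.out * ξ ^ (-(d : ℤ))) : ℚ)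

/-- `χ` is the character of a finite-dimensional complex representation of `G`. -/
def IsOrdChar (χ : G → ℂ) : Prop :=
  ∃ (m : ℕ) (ρ : Representation ℂ G (Fin m → ℂ)), ∀ g, χ g = LinearMap.trace ℂ _ (ρ g)

/-- `χ` is a Brauer character of `G` modulo the prime `p`: on `p`-regular elements it
is the sum of fixed lifts (to complex roots of unity) of the eigenvalues of a
representation of `G` over the algebraic closure of `𝔽_p`. -/
def IsBrauerChar (p : ℕ) (hp : p.Prime) (χ : G → ℂ) : Prop :=
  haveI : Fact p.Prime := ⟨hp⟩
  ∃ (m : ℕ) (ρ : G →* Matrix.GeneralLinearGroup (Fin m) (AlgebraicClosure (ZMod p)))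
    (φ : (AlgebraicClosure (ZMod p))ˣ →* ℂˣ),
    (∀ ζ : (AlgebraicClosure (ZMod p))ˣ, orderOf (φ ζ) = orderOf ζ) ∧
    ∀ g : G, ¬ p ∣ orderOf g →
      χ g = (((ρ g : Matrix (Fin m) (Fin m) (AlgebraicClosure (ZMod p))).charpoly.roots).map
        (fun r => if h : r = 0 then 0 else (φ (Units.mk0 r h) : ℂ))).sum

/-- `pa` is a distribution of virtual partial augmentations of order `n` for `G`:
integer-valued class functions indexed by the divisors of `n` satisfying (V1)–(V4). -/
def IsVPA (n : ℕ) (pa : ℕ → G → ℤ) : Prop :=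
  (∀ d, d ∣ n → ∀ g h : G, IsConj g h → pa d g = pa d h) ∧
  -- (V1)
  (∀ d, d ∣ n → classSum (pa d) = 1) ∧
  -- (V2)
  (∀ d, d ∣ n → d ≠ n → pa d 1 = 0) ∧
  -- (V3)
  (∀ d, d ∣ n → ∀ g : G, ¬ orderOf g ∣ n / d → pa d g = 0) ∧
  -- (V4) for ordinary characters
  (∀ χ : G → ℂ, IsOrdChar χ → ∀ l : ℤ, ∃ k : ℕ, muLP n pa χ (zetaC n ^ l) = k) ∧
  -- (V4) for Brauer characters modulo primes not dividing `n`
  (∀ p (hp : p.Prime), ¬ p ∣ n → ∀ χ : G → ℂ, IsBrauerChar p hp χ →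
    ∀ l : ℤ, ∃ k : ℕ, muLP n pa χ (zetaC n ^ l) = k)

/-- `pa` is the distribution of partial augmentations of an actual element of `G`
of order `n`. -/
def IsTPA (n : ℕ) (pa : ℕ → G → ℤ) : Prop :=
  ∃ g₀ : G, orderOf g₀ = n ∧
    ∀ d, d ∣ n → ∀ h : G, pa d h = if IsConj (g₀ ^ d) h then 1 else 0

/-- Accumulated virtual partial augmentation at `m`: the sum of `f` over
representatives of the conjugacy classes of elements of order `m`. -/
def accPA (f : G → ℤ) (m : ℕ) : ℤ :=
  ∑ c : ConjClasses G, if orderOf c.out = m then f c.out else 0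


/-!
Write `n = m * k` and pick `α` with `α ^ k = ζ_m ^ l` and a primitive `k`-th root of unity `ζ`;
the roots of `X ^ k - ζ_m ^ l` are the `k` distinct numbers `ζ ^ j * α`. In `∑_j μ(ζ ^ j * α, pa, χ)`
the divisor `d` of `n` contributes `tr(χ(x) α⁻ᵈ ∑_j (ζ⁻ᵈ) ^ j)`, a geometric sum that vanishes
unless `k ∣ d`, when it is `k • tr(χ(x) α⁻ᵈ)`. The surviving divisors `d = e * k` correspond to the
divisors `e` of `m`, with `n / d = m / e` and `α⁻ᵈ = (ζ_m ^ l)⁻ᵉ`, and `k / n = 1 / m`.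
-/

open Finset Polynomial

lemma IsPrimitiveRoot.sum_toFinset_nthRoots {R M : Type*} [CommRing R] [IsDomain R]
    [DecidableEq R] [AddCommMonoid M] {ζ α : R} {k : ℕ} (hζ : IsPrimitiveRoot ζ k)
    (hα : α ≠ 0) (f : R → M) :
    ∑ ξ ∈ (nthRoots k (α ^ k)).toFinset, f ξ = ∑ j ∈ range k, f (ζ ^ j * α) := by
  rw [← Multiset.toFinset_eq (hζ.nthRoots_nodup (pow_ne_zero _ hα)), sum_mk,
    hζ.nthRoots_eq rfl, Multiset.map_map]
  rfl

lemma geom_sum_eq_zero_of_pow_eq_one {K : Type*} [Field K] {ω : K} {k : ℕ} (hωk : ω ^ k = 1)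
    (hω : ω ≠ 1) : ∑ j ∈ range k, ω ^ j = 0 := by
  rw [geom_sum_eq hω, hωk, sub_self, zero_div]

lemma Nat.sum_divisors_mul_ite_dvd {M : Type*} [AddCommMonoid M] {k : ℕ} (m : ℕ) (hk : k ≠ 0)
    (f : ℕ → M) :
    ∑ d ∈ (m * k).divisors, (if k ∣ d then f d else 0) = ∑ e ∈ m.divisors, f (e * k) := by
  have : (m * k).divisors.filter (k ∣ ·) = m.divisors.map ⟨(· * k), mul_left_injective₀ hk⟩ := by
    ext d
    simp only [mem_filter, Nat.mem_divisors, mem_map, Function.Embedding.coeFn_mk]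
    constructor
    · rintro ⟨⟨hd, hmk⟩, e, rfl⟩
      rw [mul_comm k, Nat.mul_dvd_mul_iff_right (Nat.pos_of_ne_zero hk)] at hd
      exact ⟨e, ⟨hd, left_ne_zero_of_mul hmk⟩, mul_comm e k⟩
    · rintro ⟨e, ⟨he, hm⟩, rfl⟩
      exact ⟨⟨Nat.mul_dvd_mul_right he k, mul_ne_zero hm hk⟩, Dvd.intro_left e rfl⟩
  rw [← sum_filter, this, sum_map]
  rfl

lemma isPrimitiveRoot_zetaC {n : ℕ} (hn : n ≠ 0) : IsPrimitiveRoot (zetaC n) n :=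
  Complex.isPrimitiveRoot_exp n hn

lemma mem_cycF_of_pow_eq_one {N : ℕ} (hN : N ≠ 0) {x : ℂ} (hx : x ^ N = 1) : x ∈ cycF N := by
  have := NeZero.mk hN
  obtain ⟨i, -, rfl⟩ := (isPrimitiveRoot_zetaC hN).eq_pow_of_pow_eq_one hx
  exact pow_mem (IntermediateField.mem_adjoin_simple_self ℚ _) i

lemma zpow_neg_mem_cycF {n d : ℕ} (hn : n ≠ 0) (hd : d ∣ n) {x : ℂ} (hx : x ^ n = 1) :
    x ^ (-(d : ℤ)) ∈ cycF (n / d) := by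
  refine mem_cycF_of_pow_eq_one (Nat.div_ne_zero_iff_of_dvd hd |>.2 ⟨hn, ?_⟩) ?_
  · rintro rfl; exact hn (Nat.eq_zero_of_zero_dvd hd)
  · rw [← zpow_natCast, ← zpow_mul, neg_mul, ← Nat.cast_mul, Nat.mul_div_cancel' hd, zpow_neg,
      zpow_natCast, hx, inv_one]

section trQ

variable {N : ℕ} {x y z w : ℂ}

lemma trQ_zero : trQ N 0 = 0 := by
  rw [trQ, dif_pos (zero_mem _)]
  exact map_zero _

lemma trQ_add (hx : x ∈ cycF N) (hy : y ∈ cycF N) : trQ N (x + y) = trQ N x + trQ N y := by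
  rw [trQ, trQ, trQ, dif_pos hx, dif_pos hy, dif_pos (add_mem hx hy), ← map_add]
  rfl

lemma trQ_sum {ι : Type*} (s : Finset ι) {f : ι → ℂ} (hf : ∀ i ∈ s, f i ∈ cycF N) :
    trQ N (∑ i ∈ s, f i) = ∑ i ∈ s, trQ N (f i) := by
  induction s using Finset.induction_on with
  | empty => simp [trQ_zero]
  | insert i s hi ih =>
    rw [sum_insert hi, sum_insert hi, trQ_add (hf i (mem_insert_self i s))
      (sum_mem fun j hj => hf j (mem_insert_of_mem hj)),
      ih fun j hj => hf j (mem_insert_of_mem hj)]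

lemma trQ_mul_of_notMem (hz : z ∉ cycF N) (hw : w ∈ cycF N) : trQ N (z * w) = 0 := by
  rcases eq_or_ne w 0 with rfl | hw0
  · rw [mul_zero, trQ_zero]
  · refine dif_neg fun hzw => hz ?_
    simpa [hw0] using mul_mem hzw (inv_mem hw)

/-- `trQ N` is additive only on `cycF N`; for `z ∉ cycF N` both sides vanish since `cycF N`
is a field. -/
lemma trQ_mul_sum {ι : Type*} (s : Finset ι) (z : ℂ) {w : ι → ℂ} (hw : ∀ i ∈ s, w i ∈ cycF N) :
    ∑ i ∈ s, trQ N (z * w i) = trQ N (z * ∑ i ∈ s, w i) := by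
  by_cases hz : z ∈ cycF N
  · rw [mul_sum, trQ_sum s fun i hi => mul_mem hz (hw i hi)]
  · rw [trQ_mul_of_notMem hz (sum_mem hw)]
    exact sum_eq_zero fun i hi => trQ_mul_of_notMem hz (hw i hi)

lemma sum_trQ_mul_geom {k : ℕ} {α ω : ℂ} (hα : α ∈ cycF N) (hω : ω ∈ cycF N) (hωk : ω ^ k = 1)
    (z : ℂ) :
    ∑ j ∈ range k, trQ N (z * (α * ω ^ j)) = if ω = 1 then k * trQ N (z * α) else 0 := by
  split_ifs with hω1
  · simp [hω1]
  · rw [trQ_mul_sum _ z fun j _ => mul_mem hα (pow_mem hω j), ← mul_sum,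
      geom_sum_eq_zero_of_pow_eq_one hωk hω1, mul_zero, mul_zero, trQ_zero]

end trQ

lemma sum_range_trQ_mul_zpow {n k d : ℕ} (hn : n ≠ 0) (hkn : k ∣ n) (hd : d ∣ n) {ζ α : ℂ}
    (hζ : IsPrimitiveRoot ζ k) (hα : α ^ n = 1) (z : ℂ) :
    ∑ j ∈ range k, trQ (n / d) (z * (ζ ^ j * α) ^ (-(d : ℤ))) =
      if k ∣ d then k * trQ (n / d) (z * α ^ (-(d : ℤ))) else 0 := by
  have hζn : ζ ^ n = 1 := (hζ.pow_eq_one_iff_dvd n).2 hkn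
  have hsplit : ∀ j : ℕ, (ζ ^ j * α) ^ (-(d : ℤ)) = α ^ (-(d : ℤ)) * (ζ ^ (-(d : ℤ))) ^ j := by
    intro j
    rw [mul_zpow, ← zpow_natCast, ← zpow_mul, ← zpow_natCast, ← zpow_mul, mul_comm (j : ℤ),
      mul_comm]
  have hωk : (ζ ^ (-(d : ℤ))) ^ k = 1 := by
    rw [← zpow_natCast, ← zpow_mul, mul_comm, zpow_mul, zpow_natCast, hζ.pow_eq_one, one_zpow]
  have hω1 : ζ ^ (-(d : ℤ)) = 1 ↔ k ∣ d := by
    rw [hζ.zpow_eq_one_iff_dvd, Int.dvd_neg, Int.natCast_dvd_natCast]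
  simp_rw [hsplit]
  rw [sum_trQ_mul_geom (zpow_neg_mem_cycF hn hd hα) (zpow_neg_mem_cycF hn hd hζn) hωk,
    if_congr hω1 rfl rfl]

theorem muLP_mul_eq_sum_nthRoots {m k : ℕ} (hm : m ≠ 0) (hk : k ≠ 0) (pa : ℕ → G → ℤ)
    (χ : G → ℂ) {β : ℂ} (hβ : β ^ m = 1) :
    muLP m (fun e => pa (e * k)) χ β = ∑ ξ ∈ (nthRoots k β).toFinset, muLP (m * k) pa χ ξ := by
  obtain ⟨α, rfl⟩ := IsAlgClosed.exists_pow_nat_eq β (Nat.pos_of_ne_zero hk)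
  have hα0 : α ≠ 0 := by
    rintro rfl
    simp [zero_pow hk, zero_pow hm] at hβ
  have hαn : α ^ (m * k) = 1 := by rw [mul_comm, pow_mul, hβ]
  obtain ⟨ζ, hζ⟩ : ∃ ζ : ℂ, IsPrimitiveRoot ζ k := ⟨_, isPrimitiveRoot_zetaC hk⟩
  have hmk : m * k ≠ 0 := mul_ne_zero hm hk
  have key : ∀ x : G, ∑ j ∈ range k, ∑ d ∈ (m * k).divisors, (pa d x : ℂ) *
        (trQ (m * k / d) (χ x * (ζ ^ j * α) ^ (-(d : ℤ))) : ℂ) =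
      k * ∑ e ∈ m.divisors, (pa (e * k) x : ℂ) * (trQ (m / e) (χ x * (α ^ k) ^ (-(e : ℤ))) : ℂ) := by
    intro x
    rw [sum_comm]
    calc _ = ∑ d ∈ (m * k).divisors, if k ∣ d then
          k * ((pa d x : ℂ) * (trQ (m * k / d) (χ x * α ^ (-(d : ℤ))) : ℂ)) else 0 := by
          refine sum_congr rfl fun d hd => ?_
          rw [← mul_sum, ← Rat.cast_sum, sum_range_trQ_mul_zpow hmk (dvd_mul_left k m)
            (Nat.dvd_of_mem_divisors hd) hζ hαn]
          split_ifs <;> push_cast <;> ring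
      _ = k * ∑ e ∈ m.divisors, (pa (e * k) x : ℂ) *
          (trQ (m * k / (e * k)) (χ x * α ^ (-((e * k : ℕ) : ℤ))) : ℂ) := by
          rw [Nat.sum_divisors_mul_ite_dvd m hk, mul_sum]
      _ = _ := by
          refine congrArg _ (sum_congr rfl fun e _ => ?_)
          rw [Nat.mul_div_mul_right _ _ (Nat.pos_of_ne_zero hk), ← zpow_natCast α k, ← zpow_mul,
            Nat.cast_mul, mul_neg, mul_comm (k : ℤ)]
  rw [hζ.sum_toFinset_nthRoots hα0]
  unfold muLP
  conv_rhs => rw [← mul_sum, sum_comm]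
  simp only [key, ← mul_sum]
  rw [Nat.cast_mul, mul_inv, mul_assoc, inv_mul_cancel_left₀ (Nat.cast_ne_zero.2 hk)]

theorem muLP_pow_eq_sum_general {G : Type} [Group G] [Fintype G]
    (n m : ℕ) (hn : 0 < n) (hmn : m ∣ n)
    (pa : ℕ → G → ℤ) (χ : G → ℂ)
    (l : ℤ) :
    muLP m (fun d => pa (d * (n / m))) χ (zetaC m ^ l) =
      ∑ ξ ∈ ((Polynomial.X ^ (n / m) - Polynomial.C (zetaC m ^ l)).roots).toFinset,
        muLP n pa χ ξ := by
  obtain ⟨k, rfl⟩ := hmn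
  have hm : m ≠ 0 := left_ne_zero_of_mul hn.ne'
  have hζl : (zetaC m ^ l) ^ m = 1 := by
    rw [← zpow_natCast, ← zpow_mul, mul_comm, zpow_mul, zpow_natCast,
      (isPrimitiveRoot_zetaC hm).pow_eq_one, one_zpow]
  rw [Nat.mul_div_cancel_left k (Nat.pos_of_ne_zero hm)]
  exact muLP_mul_eq_sum_nthRoots hm (right_ne_zero_of_mul hn.ne') pa χ hζl

/-- For `pa ∈ VPA_n(G)`, `m ∣ n` and a character `χ` (ordinary, or Brauer modulo a
prime not dividing `n`), the Luthar–Passi multiplicity of `ζ_m^l` for the power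
distribution `pa^{n/m}` is the sum of the multiplicities `μ(ξ, pa, χ)` over the
`ξ` with `ξ^{n/m} = ζ_m^l`. -/
theorem muLP_pow_eq_sum {G : Type} [Group G] [Fintype G]
    (n m : ℕ) (hn : 0 < n) (hm : 0 < m) (hmn : m ∣ n)
    (pa : ℕ → G → ℤ) (hpa : IsVPA n pa) (χ : G → ℂ)
    (hχ : IsOrdChar χ ∨ ∃ p, ∃ hp : p.Prime, ¬ p ∣ n ∧ IsBrauerChar p hp χ)
    (l : ℤ) :
    muLP m (fun d => pa (d * (n / m))) χ (zetaC m ^ l) =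
      ∑ ξ ∈ ((Polynomial.X ^ (n / m) - Polynomial.C (zetaC m ^ l)).roots).toFinset,
        muLP n pa χ ξ :=
  muLP_pow_eq_sum_general n m hn hmn pa χ l

end
end

section
/- Let G be a finite group and n a positive integer. If the set VPA_n(G) of distributions of virtual partial augmentations of order n for G is nonempty, then every prime divisor of n divides the order of G. -/
open scoped Classical
noncomputable section

variable {G : Type} [Group G] [Fintype G]

/-- If the set of distributions of virtual partial augmentations of order `n` for a
finite group `G` is nonempty, then every prime divisor of `n` divides `|G|`. -/
theorem prime_dvd_card_of_VPA_nonempty {G : Type} [Group G] [Fintype G]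
    (n : ℕ) (hn : 0 < n) (h : ∃ pa : ℕ → G → ℤ, IsVPA n pa) :
    ∀ p : ℕ, p.Prime → p ∣ n → p ∣ Fintype.card G := by
  intro p hp hpn
  by_contra hpG
  obtain ⟨pa, hconj, hV1, hV2, hV3, -⟩ := h
  set d := n / p with hd_def
  have hd : d ∣ n := Nat.div_dvd_of_dvd hpn
  have hdn : d ≠ n := by
    have : d < n := Nat.div_lt_self hn hp.one_lt
    omega
  have hnd : n / d = p := Nat.div_div_self hpn hn.ne'
  have hzero : classSum (pa d) = (0 : ℤ) := by
    unfold classSum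
    apply Finset.sum_eq_zero
    intro c _
    by_cases hord : orderOf c.out ∣ n / d
    · rw [hnd] at hord
      rcases (Nat.dvd_prime hp).mp hord with h1 | hpord
      · have hone : c.out = 1 := orderOf_eq_one_iff.mp h1
        rw [hone]
        exact hV2 d hd hdn
      · exact absurd (hpord ▸ orderOf_dvd_card) hpG
    · exact hV3 d hd c.out hord
  rw [hV1 d hd] at hzero
  exact one_ne_zero hzero

end
end

section
/- Let p be an odd prime, q = p^f, G = PSL(2,q), and let g_0 be a p-regular element of G of order m, with q ≡ ε mod 2m where ε = ±1. For an even positive integer n = r_0 + r_1 p + ... + r_k p^k with 0 ≤ r_j ≤ p−1, the subspace W of homogeneous polynomials of degree n in two variables over a field K of characteristic p spanned by the monomials X^i Y^{n−i} with i = i_0 + i_1 p + ... + i_k p^k and 0 ≤ i_j ≤ r_j for all j, is invariant under the natural action of SL(2,q) on K[X,Y]. -/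
open scoped Classical
noncomputable section

open MvPolynomial

/-- The action of a matrix `[[a,b],[c,d]]` over `SL(2, F)` (with entries mapped into
`K` via `φ`) on `K[X,Y]`, given by `X ↦ aX + bY`, `Y ↦ cX + dY`. -/
def sl2Act {F K : Type} [Field F] [Field K] (φ : F →+* K)
    (M : Matrix.SpecialLinearGroup (Fin 2) F) :
    MvPolynomial (Fin 2) K →ₐ[K] MvPolynomial (Fin 2) K :=
  MvPolynomial.bind₁
    ![C (φ ((M : Matrix (Fin 2) (Fin 2) F) 0 0)) * X 0 +
        C (φ ((M : Matrix (Fin 2) (Fin 2) F) 0 1)) * X 1,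
      C (φ ((M : Matrix (Fin 2) (Fin 2) F) 1 0)) * X 0 +
        C (φ ((M : Matrix (Fin 2) (Fin 2) F) 1 1)) * X 1]

/-! Splitting exponents into base-`p` digits gives `W = ∏ⱼ Wⱼ`, where `Wⱼ` is spanned by the
monomials of degree `rⱼ` in `X^{pʲ}` and `Y^{pʲ}`. By Frobenius, a linear substitution `X ↦ aX + bY`,
`Y ↦ cX + dY` sends `X^{pʲ}` and `Y^{pʲ}` to linear combinations of `X^{pʲ}` and `Y^{pʲ}`, hence
maps each `Wⱼ` into itself, and therefore also their product `W`. -/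

section BinaryFormSpan

variable (K : Type*) {A : Type*} [CommSemiring K] [CommSemiring A] [Algebra K A]

def binaryFormSpan (u v : A) (m : ℕ) : Submodule K A :=
  Submodule.span K {w | ∃ t ≤ m, w = u ^ t * v ^ (m - t)}

variable {K}

theorem binaryFormSpan_mul_le (u v : A) (m₁ m₂ : ℕ) :
    binaryFormSpan K u v m₁ * binaryFormSpan K u v m₂ ≤ binaryFormSpan K u v (m₁ + m₂) := by
  rw [binaryFormSpan, binaryFormSpan, Submodule.span_mul_span]
  refine Submodule.span_mono ?_
  rintro _ ⟨_, ⟨t₁, ht₁, rfl⟩, _, ⟨t₂, ht₂, rfl⟩, rfl⟩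
  refine ⟨t₁ + t₂, by omega, ?_⟩
  rw [show m₁ + m₂ - (t₁ + t₂) = (m₁ - t₁) + (m₂ - t₂) by omega]
  ring

theorem smul_add_smul_pow_mem_binaryFormSpan (α β : K) (u v : A) (m : ℕ) :
    (α • u + β • v) ^ m ∈ binaryFormSpan K u v m := by
  rw [add_pow]
  refine Submodule.sum_mem _ fun t ht => ?_
  have hterm : (α • u) ^ t * (β • v) ^ (m - t) * (m.choose t : A)
      = (α ^ t * β ^ (m - t) * m.choose t) • (u ^ t * v ^ (m - t)) := by
    simp only [Algebra.smul_def, map_mul, map_pow, map_natCast, mul_pow]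
    ring
  rw [hterm]
  exact Submodule.smul_mem _ _
    (Submodule.subset_span ⟨t, Nat.lt_succ_iff.mp (Finset.mem_range.mp ht), rfl⟩)

theorem map_binaryFormSpan_le (g : A →ₐ[K] A) {u v : A} {α β γ δ : K}
    (hu : g u = α • u + β • v) (hv : g v = γ • u + δ • v) (m : ℕ) :
    (binaryFormSpan K u v m).map g.toLinearMap ≤ binaryFormSpan K u v m := by
  rw [binaryFormSpan, Submodule.map_span, Submodule.span_le]
  rintro _ ⟨_, ⟨t, ht, rfl⟩, rfl⟩
  have hmem := binaryFormSpan_mul_le u v t (m - t) <| Submodule.mul_mem_mul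
    (smul_add_smul_pow_mem_binaryFormSpan α β u v t)
    (smul_add_smul_pow_mem_binaryFormSpan γ δ u v (m - t))
  rw [Nat.add_sub_cancel' ht] at hmem
  rw [SetLike.mem_coe, AlgHom.toLinearMap_apply, map_mul, map_pow, map_pow, hu, hv]
  exact hmem

theorem map_binaryFormSpan_pow_expChar_pow_le (p : ℕ) [ExpChar A p] (g : A →ₐ[K] A)
    {x y : A} {α β γ δ : K} (hx : g x = α • x + β • y) (hy : g y = γ • x + δ • y) (e m : ℕ) :
    (binaryFormSpan K (x ^ p ^ e) (y ^ p ^ e) m).map g.toLinearMap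
      ≤ binaryFormSpan K (x ^ p ^ e) (y ^ p ^ e) m := by
  refine map_binaryFormSpan_le g (α := α ^ p ^ e) (β := β ^ p ^ e) (γ := γ ^ p ^ e)
    (δ := δ ^ p ^ e) ?_ ?_ m <;>
  rw [map_pow, ‹g _ = _›, add_pow_expChar_pow, smul_pow, smul_pow]

theorem prod_binaryFormSpan {ι : Type*} [Fintype ι] (u v : ι → A) (r : ι → ℕ) :
    ∏ i, binaryFormSpan K (u i) (v i) (r i)
      = Submodule.span K
          {w | ∃ t : ι → ℕ, (∀ i, t i ≤ r i) ∧ w = ∏ i, u i ^ t i * v i ^ (r i - t i)} := by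
  simp only [binaryFormSpan, Submodule.prod_span]
  congr 1
  ext w
  rw [Set.mem_finsetProd]
  constructor
  · rintro ⟨g, hg, rfl⟩
    choose t ht hgt using fun i => hg (Finset.mem_univ i)
    exact ⟨t, ht, Finset.prod_congr rfl fun i _ => hgt i⟩
  · rintro ⟨t, ht, rfl⟩
    exact ⟨fun i => u i ^ t i * v i ^ (r i - t i), fun {i} _ => ⟨t i, ht i, rfl⟩, rfl⟩

end BinaryFormSpan

theorem Submodule.map_prod_le_of_forall {K A ι : Type*} [CommSemiring K] [CommSemiring A]
    [Algebra K A] (g : A →ₐ[K] A) (s : Finset ι) (M : ι → Submodule K A)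
    (h : ∀ i ∈ s, (M i).map g.toLinearMap ≤ M i) :
    (∏ i ∈ s, M i).map g.toLinearMap ≤ ∏ i ∈ s, M i := by
  rw [← Submodule.mapHom_apply, map_prod]
  exact Finset.prod_le_prod' h

theorem prod_pow_mul_pow_sub {A ι : Type*} [CommMonoid A] [Fintype ι] (x y : A)
    (e r t : ι → ℕ) (ht : ∀ i, t i ≤ r i) :
    ∏ i, (x ^ e i) ^ t i * (y ^ e i) ^ (r i - t i)
      = x ^ (∑ i, t i * e i) * y ^ (∑ i, r i * e i - ∑ i, t i * e i) := by
  have hsplit : ∑ i, r i * e i = ∑ i, t i * e i + ∑ i, (r i - t i) * e i := by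
    rw [← Finset.sum_add_distrib]
    exact Finset.sum_congr rfl fun i _ => by rw [← add_mul, Nat.add_sub_cancel' (ht i)]
  rw [hsplit, Nat.add_sub_cancel_left, Finset.prod_mul_distrib, ← Finset.prod_pow_eq_pow_sum,
    ← Finset.prod_pow_eq_pow_sum]
  simp only [← pow_mul, mul_comm]

theorem sl2Act_X {F K : Type} [Field F] [Field K] (φ : F →+* K)
    (M : Matrix.SpecialLinearGroup (Fin 2) F) (i : Fin 2) :
    sl2Act φ M (X i) = φ (M i 0) • X 0 + φ (M i 1) • X 1 := by
  fin_cases i <;> simp [sl2Act, smul_eq_C_mul]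

theorem sl2_invariant_subspace_general
    (p : ℕ) (hp : p.Prime)
    (K : Type) [Field K] [CharP K p]
    (F : Type) [Field F] (φ : F →+* K)
    (k : ℕ) (r : Fin (k + 1) → ℕ)
    (n : ℕ) (hn : n = ∑ j : Fin (k + 1), r j * p ^ (j : ℕ))
    (W : Submodule K (MvPolynomial (Fin 2) K))
    (hW : W = Submodule.span K
      { P : MvPolynomial (Fin 2) K | ∃ s : Fin (k + 1) → ℕ, (∀ j, s j ≤ r j) ∧
          P = X 0 ^ (∑ j : Fin (k + 1), s j * p ^ (j : ℕ)) *
              X 1 ^ (n - ∑ j : Fin (k + 1), s j * p ^ (j : ℕ)) }) :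
    ∀ (M : Matrix.SpecialLinearGroup (Fin 2) F), ∀ P ∈ W, sl2Act φ M P ∈ W := by
  have : Fact p.Prime := ⟨hp⟩
  have hW_prod : W = ∏ j : Fin (k + 1),
      binaryFormSpan K (X 0 ^ p ^ (j : ℕ)) (X 1 ^ p ^ (j : ℕ)) (r j) := by
    rw [hW, prod_binaryFormSpan, hn]
    congr 1
    ext P
    exact exists_congr fun s => and_congr_right fun hs => by
      rw [prod_pow_mul_pow_sub _ _ (fun j : Fin (k + 1) => p ^ (j : ℕ)) r s hs]
  intro M P hP
  rw [hW_prod] at hP ⊢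
  refine Submodule.map_prod_le_of_forall (sl2Act φ M) _ _ (fun j _ => ?_) ⟨P, hP, rfl⟩
  exact map_binaryFormSpan_pow_expChar_pow_le p (sl2Act φ M) (sl2Act_X φ M 0)
    (sl2Act_X φ M 1) j (r j)

/-- Let `p` be an odd prime, `q = p^f`, `K` a field of characteristic `p`, and
`n = r_0 + r_1 p + ⋯ + r_k p^k` an even positive integer with `0 ≤ r_j ≤ p - 1`.
The subspace `W` of homogeneous polynomials of degree `n` spanned by the monomials
`X^i Y^{n-i}` with `i = i_0 + i_1 p + ⋯ + i_k p^k`, `0 ≤ i_j ≤ r_j`, is invariant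
under the natural action of `SL(2, q)` on `K[X,Y]`. -/
theorem sl2_invariant_subspace
    (p : ℕ) (hp : p.Prime) (hodd : Odd p)
    (K : Type) [Field K] [CharP K p]
    (F : Type) [Field F] [Fintype F] (f : ℕ) (hf : 0 < f)
    (hcard : Fintype.card F = p ^ f) (φ : F →+* K)
    (k : ℕ) (r : Fin (k + 1) → ℕ) (hr : ∀ j, r j ≤ p - 1)
    (n : ℕ) (hn : n = ∑ j : Fin (k + 1), r j * p ^ (j : ℕ))
    (hne : Even n) (hnpos : 0 < n)
    (W : Submodule K (MvPolynomial (Fin 2) K))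
    (hW : W = Submodule.span K
      { P : MvPolynomial (Fin 2) K | ∃ s : Fin (k + 1) → ℕ, (∀ j, s j ≤ r j) ∧
          P = X 0 ^ (∑ j : Fin (k + 1), s j * p ^ (j : ℕ)) *
              X 1 ^ (n - ∑ j : Fin (k + 1), s j * p ^ (j : ℕ)) }) :
    ∀ (M : Matrix.SpecialLinearGroup (Fin 2) F), ∀ P ∈ W, sl2Act φ M P ∈ W :=
  sl2_invariant_subspace_general p hp K F φ k r n hn W hW

end
end

section
/- Let t ≥ 5 be a prime, n = (t−1)/2, and let Odd be the set of odd integers in [1, t−1]. Suppose a : {1, ..., t−1} → Z satisfies: (a) Σ_{i ∈ Odd} a(t−i) = 0 and Σ_{i ∈ Odd} a(i) = 1; (b) for all l ∈ {1,...,t−1}, (1/2)((−1)^l (a(t−i_l) − a(i_l)) + w_l) is a non-negative integer, where i_l = l if l odd and t−l otherwise, and w_l = 1 if l ∈ {1, t−1} and 0 otherwise; (c) for all l ∈ {1,...,t−1}, (1/2)((−1)^l (a(i_{nl}) + a(t−i_{nl}) − a(i_l) + a(t−i_l)) + W_l) is a non-negative integer, where W_l = 1 if l ∈ {1, 2, t−2,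 t−1} and 0 otherwise. Then either a(1) = 1 and a(l) = 0 for all 2 ≤ l ≤ t−1, or a(t−1) = −1, a(n) = a(n+1) = 1, and a(l) = 0 for all l in [1, t−1] not in {n, n+1, t−1}. -/
private lemma mod1' (t n m : ℕ) (h : 2*n+1 = t) (hm1 : 1 ≤ m) (hm2 : m ≤ n) :
    n * (t - 2*m) % t = m := by
  obtain ⟨k, hk⟩ : ∃ k, n = m + k := ⟨n - m, by omega⟩
  have h1 : t - 2*m = 2*k+1 := by omega
  have h2 : n * (t - 2*m) = k * t + m := by
    rw [h1, ← h, hk]; ring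
  rw [h2, Nat.add_comm, Nat.add_mul_mod_self_right]
  exact Nat.mod_eq_of_lt (by omega)

private lemma mod2' (t n m : ℕ) (h : 2*n+1 = t) (hm1 : 1 ≤ m) (hm2 : m ≤ n) :
    n * (2*m) % t = t - m := by
  obtain ⟨j, hj⟩ : ∃ j, m = 1 + j := ⟨m - 1, by omega⟩
  obtain ⟨k, hk⟩ : ∃ k, n = m + k := ⟨n - m, by omega⟩
  have h2 : n * (2*m) = j * t + (t - m) := by
    have h1 : t - m = 2*k + m + 1 := by omega
    rw [h1, ← h, hk, hj]; ring
  rw [h2, Nat.add_comm, Nat.add_mul_mod_self_right]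
  exact Nat.mod_eq_of_lt (by omega)

/-- The combinatorial core of the classification of `VPA_{2t}(PSL(2,q))`:
a function `a : [1, t-1] → ℤ` satisfying the constraints (a), (b), (c) coming from
the HeLP inequalities is either the indicator of `1`, or takes value `-1` at `t-1`,
`1` at `n` and `n+1` (`n = (t-1)/2`), and `0` elsewhere. -/
theorem helper_classification (t : ℕ) (ht : t.Prime) (ht5 : 5 ≤ t)
    (n : ℕ) (hn : n = (t - 1) / 2)
    (i : ℕ → ℕ) (hi : ∀ m, i m = if Odd m then m else t - m)
    (w W : ℕ → ℤ)
    (hw : ∀ l, w l = if l = 1 ∨ l = t - 1 then 1 else 0)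
    (hW : ∀ l, W l = if l = 1 ∨ l = 2 ∨ l = t - 2 ∨ l = t - 1 then 1 else 0)
    (a : ℕ → ℤ)
    (ha0 : ∑ x ∈ (Finset.Icc 1 (t - 1)).filter (fun x => Odd x), a (t - x) = 0)
    (ha1 : ∑ x ∈ (Finset.Icc 1 (t - 1)).filter (fun x => Odd x), a x = 1)
    (hb : ∀ l, 1 ≤ l → l ≤ t - 1 → ∃ k : ℕ,
      (-1 : ℤ) ^ l * (a (t - i l) - a (i l)) + w l = 2 * k)
    (hc : ∀ l, 1 ≤ l → l ≤ t - 1 → ∃ k : ℕ,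
      (-1 : ℤ) ^ l * (a (i (n * l % t)) + a (t - i (n * l % t))
          - a (i l) + a (t - i l)) + W l = 2 * k) :
    (a 1 = 1 ∧ ∀ l, 2 ≤ l → l ≤ t - 1 → a l = 0) ∨
    (a (t - 1) = -1 ∧ a n = 1 ∧ a (n + 1) = 1 ∧
      ∀ l, 1 ≤ l → l ≤ t - 1 → l ≠ n → l ≠ n + 1 → l ≠ t - 1 → a l = 0) := by
  have htodd : t % 2 = 1 := Nat.odd_iff.mp (ht.odd_of_ne_two (by omega))
  have h2n : 2 * n + 1 = t := by omega
  -- the symmetrized sum a (i M) + a (t - i M)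
  have hMsum : ∀ M : ℕ, M ≤ t → a (i M) + a (t - i M) = a M + a (t - M) := by
    intro M hM
    rw [hi M]
    rcases Nat.even_or_odd M with he | ho
    · rw [if_neg (by rw [Nat.even_iff] at he; rw [Nat.odd_iff]; omega),
        Nat.sub_sub_self hM, add_comm]
    · rw [if_pos ho]
  -- uniform form of condition (b)
  have hB : ∀ l, 1 ≤ l → l ≤ t - 1 → ∃ k : ℕ, a l - a (t - l) + w l = 2 * k := by
    intro l h1 h2
    obtain ⟨k, hk⟩ := hb l h1 h2
    refine ⟨k, ?_⟩
    rw [hi l] at hk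
    rcases Nat.even_or_odd l with he | ho
    · rw [if_neg (by rw [Nat.even_iff] at he; rw [Nat.odd_iff]; omega),
        Nat.sub_sub_self (by omega), he.neg_one_pow] at hk
      linarith
    · rw [if_pos ho, ho.neg_one_pow] at hk
      linarith
  -- uniform form of condition (c)
  have hC : ∀ l, 1 ≤ l → l ≤ t - 1 → ∃ k : ℕ,
      (-1:ℤ)^l * (a (n * l % t) + a (t - n * l % t)) + (a l - a (t - l)) + W l = 2 * k := by
    intro l h1 h2
    obtain ⟨k, hk⟩ := hc l h1 h2
    refine ⟨k, ?_⟩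
    rw [hMsum (n * l % t) (le_of_lt (Nat.mod_lt _ (by omega)))] at hk
    rw [hi l] at hk
    rcases Nat.even_or_odd l with he | ho
    · rw [if_neg (by rw [Nat.even_iff] at he; rw [Nat.odd_iff]; omega),
        Nat.sub_sub_self (by omega), he.neg_one_pow] at hk
      rw [he.neg_one_pow]
      linarith
    · rw [if_pos ho, ho.neg_one_pow] at hk
      rw [ho.neg_one_pow]
      linarith
  -- symmetry away from 1, t-1
  have hsym : ∀ m, 2 ≤ m → m ≤ t - 2 → a m = a (t - m) := by
    intro m hm1 hm2
    obtain ⟨k1, hk1⟩ := hB m (by omega) (by omega)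
    obtain ⟨k2, hk2⟩ := hB (t - m) (by omega) (by omega)
    rw [Nat.sub_sub_self (by omega)] at hk2
    rw [hw, if_neg (by omega)] at hk1
    rw [hw, if_neg (by omega)] at hk2
    omega
  -- a 1 = a (t-1) + 1 from the two sum conditions
  have hd : a 1 = a (t - 1) + 1 := by
    have hsub : ∑ x ∈ (Finset.Icc 1 (t-1)).filter (fun x => Odd x), (a x - a (t - x)) = 1 := by
      rw [Finset.sum_sub_distrib, ha1, ha0]; ring
    have h1mem : (1:ℕ) ∈ (Finset.Icc 1 (t-1)).filter (fun x => Odd x) := by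
      rw [Finset.mem_filter, Finset.mem_Icc, Nat.odd_iff]
      omega
    rw [← Finset.add_sum_erase _ _ h1mem] at hsub
    have hz : ∑ x ∈ ((Finset.Icc 1 (t-1)).filter (fun x => Odd x)).erase 1,
        (a x - a (t - x)) = 0 := by
      apply Finset.sum_eq_zero
      intro x hx
      rw [Finset.mem_erase, Finset.mem_filter, Finset.mem_Icc, Nat.odd_iff] at hx
      rw [hsym x (by omega) (by omega)]
      ring
    rw [hz] at hsub
    linarith
  -- vanishing of the symmetrized values in the middle
  have hszero : ∀ m, 2 ≤ m → m + 1 ≤ n → a m + a (t - m) = 0 := by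
    intro m hm1 hm2
    obtain ⟨k1, hk1⟩ := hC (t - 2*m) (by omega) (by omega)
    obtain ⟨k2, hk2⟩ := hC (2*m) (by omega) (by omega)
    rw [mod1' t n m h2n (by omega) (by omega)] at hk1
    rw [mod2' t n m h2n (by omega) (by omega)] at hk2
    have ho1 : Odd (t - 2*m) := by rw [Nat.odd_iff]; omega
    have he2 : Even (2*m) := even_two_mul m
    rw [ho1.neg_one_pow] at hk1
    rw [he2.neg_one_pow] at hk2
    rw [hW, if_neg (by omega)] at hk1
    rw [hW, if_neg (by omega)] at hk2
    rw [Nat.sub_sub_self (by omega : 2*m ≤ t)] at hk1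
    rw [Nat.sub_sub_self (by omega : m ≤ t)] at hk2
    have e2 : a (2*m) = a (t - 2*m) := hsym (2*m) (by omega) (by omega)
    omega
  -- a vanishes away from {1, n, n+1, t-1}
  have hzero : ∀ m, 1 ≤ m → m ≤ t - 1 → m ≠ 1 → m ≠ t - 1 → m ≠ n → m ≠ n + 1 → a m = 0 := by
    intro m h1 h2 h3 h4 h5 h6
    rcases le_or_gt m n with hle | hgt
    · have hs := hszero m (by omega) (by omega)
      have e := hsym m (by omega) (by omega)
      omega
    · have hs := hszero (t - m) (by omega) (by omega)
      have e := hsym (t - m) (by omega) (by omega)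
      rw [Nat.sub_sub_self (by omega)] at hs e
      omega
  -- a n = a (n+1)
  have hna : a n = a (n + 1) := by
    have e := hsym n (by omega) (by omega)
    rwa [show t - n = n + 1 by omega] at e
  -- a n ∈ {0, 1}
  have hn01 : a n = 0 ∨ a n = 1 := by
    obtain ⟨k1, hk1⟩ := hC 1 le_rfl (by omega)
    obtain ⟨k2, hk2⟩ := hC (t-1) (by omega) (by omega)
    have e1 : n * 1 % t = n := by rw [Nat.mul_one]; exact Nat.mod_eq_of_lt (by omega)
    rw [e1, pow_one, hW, if_pos (Or.inl rfl), show t - n = n + 1 by omega] at hk1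
    have e2 : n * (t - 1) % t = n + 1 := by
      rw [show t - 1 = 2*n by omega, mod2' t n n h2n (by omega) le_rfl,
        show t - n = n + 1 by omega]
    have he : Even (t - 1) := by rw [Nat.even_iff]; omega
    rw [e2, he.neg_one_pow, hW, if_pos (Or.inr (Or.inr (Or.inr rfl))),
      Nat.sub_sub_self (by omega : 1 ≤ t), show t - (n+1) = n by omega] at hk2
    omega
  -- a (t-1) ∈ {-1, 0}
  have ht1v : a (t - 1) = -1 ∨ a (t - 1) = 0 := by
    obtain ⟨k1, hk1⟩ := hC 2 (by omega) (by omega)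
    obtain ⟨k2, hk2⟩ := hC (t-2) (by omega) (by omega)
    have e1 : n * 2 % t = t - 1 := by
      have := mod2' t n 1 h2n le_rfl (by omega)
      rwa [Nat.mul_one] at this
    have e2 : n * (t - 2) % t = 1 := by
      have := mod1' t n 1 h2n le_rfl (by omega)
      rwa [Nat.mul_one] at this
    have he : Even 2 := even_two
    have ho : Odd (t - 2) := by rw [Nat.odd_iff]; omega
    rw [e1, he.neg_one_pow, hW, if_pos (Or.inr (Or.inl rfl)),
      Nat.sub_sub_self (by omega : 1 ≤ t)] at hk1
    rw [e2, ho.neg_one_pow, hW, if_pos (Or.inr (Or.inr (Or.inl rfl))),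
      Nat.sub_sub_self (by omega : 2 ≤ t)] at hk2
    have e3 : a 2 = a (t - 2) := hsym 2 (by omega) (by omega)
    omega
  -- the odd one among n, n+1
  obtain ⟨p, hp1, hp2⟩ : ∃ p, (p = n ∨ p = n + 1) ∧ p % 2 = 1 := by
    rcases Nat.even_or_odd n with h | h
    · exact ⟨n + 1, Or.inr rfl, by rw [Nat.even_iff] at h; omega⟩
    · exact ⟨n, Or.inl rfl, Nat.odd_iff.mp h⟩
  have hap : a p = a n := by
    rcases hp1 with h | h
    · rw [h]
    · rw [h, ← hna]
  have h1mem : (1:ℕ) ∈ (Finset.Icc 1 (t-1)).filter (fun x => Odd x) := by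
    rw [Finset.mem_filter, Finset.mem_Icc, Nat.odd_iff]
    omega
  have hpmem : p ∈ ((Finset.Icc 1 (t-1)).filter (fun x => Odd x)).erase 1 := by
    rw [Finset.mem_erase, Finset.mem_filter, Finset.mem_Icc, Nat.odd_iff]
    omega
  rw [← Finset.add_sum_erase _ a h1mem, ← Finset.add_sum_erase _ a hpmem] at ha1
  have hz : ∑ x ∈ (((Finset.Icc 1 (t-1)).filter (fun x => Odd x)).erase 1).erase p, a x = 0 := by
    apply Finset.sum_eq_zero
    intro x hx
    rw [Finset.mem_erase, Finset.mem_erase, Finset.mem_filter, Finset.mem_Icc,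
      Nat.odd_iff] at hx
    exact hzero x (by omega) (by omega) (by omega) (by omega) (by omega) (by omega)
  rw [hz] at ha1
  -- ha1 : a 1 + (a p + 0) = 1
  have han : a n = - a (t - 1) := by omega
  rcases ht1v with h | h
  · right
    refine ⟨h, by omega, by omega, ?_⟩
    intro l l1 l2 l3 l4 l5
    rcases eq_or_ne l 1 with rfl | hne
    · omega
    · exact hzero l l1 l2 hne l5 l3 l4
  · left
    refine ⟨by omega, ?_⟩
    intro l hl1 hl2
    rcases eq_or_ne l n with rfl | h1
    · omega
    rcases eq_or_ne l (n+1) with rfl | h2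
    · omega
    rcases eq_or_ne l (t-1) with rfl | h3
    · exact h
    · exact hzero l (by omega) hl2 (by omega) h3 h1 h2
end
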